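/- Stability bound for n fields (core of Theorem F.1): let k ≥ 1, let ι₁, ι₂ be finite index types of cardinalities n₁, n₂, let q ≥ 1 and M ≥ 0 be real numbers, and let f : ι₁ → (Fin k → ℝ × ℝ), g : ι₂ → (Fin k → ℝ × ℝ) be families such that for every index i and every j ∈ Fin k, writing (f i) j = (a, b), one has a ≤ b and b − a ≤ M, and similarly for g. Define the diagonal-augmented families f̃, g̃ : ι₁ ⊕ ι₂ → (Fin k → ℝ × ℝ) by f̃(inl i) = f i, f̃(inr j) = Diag(g j), g̃(inl i) = Diag(f i), g̃(inr j) = g j. Then D_q(f̃, g̃) ≤ ((n₁ + n₂) · M^q)^{1/q}. (In Theorem F.1, n₁ and n₂ are the quantities T₁ and T₂ bounding the numbers of points of the two multi-dimensional persistence diagrams, and M = max of the amplitudes of all component fields of f and g.) -/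

import Mathlib

/-!
Match every point with its own diagonal projection (the identity permutation of `ι₁ ⊕ ι₂`).
Each birth–death pair `(a, b)` is then moved by `(b - a) / 2 ≤ M` in both coordinates, so every
one of the `n₁ + n₂` matched pairs costs at most `M ^ q`.
-/

/-- The `q`-Wasserstein matching distance between two finite families of points in a
seminormed additive commutative group: the infimum over permutations `σ` of
`(∑ i, ‖f i - g (σ i)‖ ^ q) ^ (1/q)`. -/
noncomputable def wassersteinDist {ι : Type*} [Fintype ι] {E : Type*}
    [SeminormedAddCommGroup E] (q : ℝ) (f g : ι → E) : ℝ :=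
  ⨅ σ : Equiv.Perm ι, (∑ i, ‖f i - g (σ i)‖ ^ q) ^ (1 / q)

/-- The diagonal projection of a point of a multi-dimensional persistence diagram of a
multi-field with `k` component scalar fields, recorded as `k` birth–death pairs:
each pair `(a, b)` is sent to `((a+b)/2, (a+b)/2)`. -/
noncomputable def DiagK {k : ℕ} (x : Fin k → ℝ × ℝ) : Fin k → ℝ × ℝ :=
  fun i => (((x i).1 + (x i).2) / 2, ((x i).1 + (x i).2) / 2)

section wassersteinDist

variable {ι : Type*} [Fintype ι] {E : Type*} [SeminormedAddCommGroup E]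

theorem wassersteinDist_le_of_perm (q : ℝ) (f g : ι → E) (σ : Equiv.Perm ι) :
    wassersteinDist q f g ≤ (∑ i, ‖f i - g (σ i)‖ ^ q) ^ (1 / q) := by
  refine ciInf_le ⟨0, ?_⟩ σ
  rintro _ ⟨τ, rfl⟩
  exact Real.rpow_nonneg (Finset.sum_nonneg fun i _ => Real.rpow_nonneg (norm_nonneg _) q) _

theorem wassersteinDist_le_of_norm_sub_le {q M : ℝ} (hq : 0 ≤ q) {f g : ι → E}
    (hfg : ∀ i, ‖f i - g i‖ ≤ M) :
    wassersteinDist q f g ≤ ((Fintype.card ι : ℝ) * M ^ q) ^ (1 / q) := by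
  have hsum : ∑ i, ‖f i - g i‖ ^ q ≤ (Fintype.card ι : ℝ) * M ^ q := by
    calc ∑ i, ‖f i - g i‖ ^ q ≤ ∑ _i : ι, M ^ q :=
          Finset.sum_le_sum fun i _ => Real.rpow_le_rpow (norm_nonneg _) (hfg i) hq
      _ = (Fintype.card ι : ℝ) * M ^ q := by simp
  calc wassersteinDist q f g ≤ (∑ i, ‖f i - g i‖ ^ q) ^ (1 / q) :=
        wassersteinDist_le_of_perm q f g (Equiv.refl ι)
    _ ≤ ((Fintype.card ι : ℝ) * M ^ q) ^ (1 / q) :=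
        Real.rpow_le_rpow (Finset.sum_nonneg fun i _ => Real.rpow_nonneg (norm_nonneg _) q)
          hsum (by positivity)

end wassersteinDist

theorem norm_sub_diagK_le {k : ℕ} {M : ℝ} (hM : 0 ≤ M) {x : Fin k → ℝ × ℝ}
    (hx : ∀ j, (x j).1 ≤ (x j).2 ∧ (x j).2 - (x j).1 ≤ M) :
    ‖x - DiagK x‖ ≤ M := by
  refine (pi_norm_le_iff_of_nonneg hM).2 fun j => ?_
  obtain ⟨hab, hba⟩ := hx j
  simp only [Prod.norm_def, Pi.sub_apply, DiagK, Prod.fst_sub, Prod.snd_sub, Real.norm_eq_abs,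
    sup_le_iff, abs_le]
  refine ⟨⟨?_, ?_⟩, ?_, ?_⟩ <;> linarith

theorem stability_bound_n_fields_general {k : ℕ}
    {ι₁ ι₂ : Type*} [Fintype ι₁] [Fintype ι₂]
    (q M : ℝ) (hq : 1 ≤ q) (hM : 0 ≤ M)
    (f : ι₁ → Fin k → ℝ × ℝ) (g : ι₂ → Fin k → ℝ × ℝ)
    (hf : ∀ i, ∀ j : Fin k, (f i j).1 ≤ (f i j).2 ∧ (f i j).2 - (f i j).1 ≤ M)
    (hg : ∀ i, ∀ j : Fin k, (g i j).1 ≤ (g i j).2 ∧ (g i j).2 - (g i j).1 ≤ M) :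
    wassersteinDist q
        (Sum.elim f (fun j => DiagK (g j)))
        (Sum.elim (fun i => DiagK (f i)) g)
      ≤ (((Fintype.card ι₁ : ℝ) + (Fintype.card ι₂ : ℝ)) * M ^ q) ^ (1 / q) := by
  have hmatch : ∀ i, ‖Sum.elim f (fun j => DiagK (g j)) i -
      Sum.elim (fun i => DiagK (f i)) g i‖ ≤ M := by
    rintro (i | j)
    · exact norm_sub_diagK_le hM (hf i)
    · simpa only [Sum.elim_inr, norm_sub_rev] using norm_sub_diagK_le hM (hg j)
  simpa only [Fintype.card_sum, Nat.cast_add] using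
    wassersteinDist_le_of_norm_sub_le (by linarith) hmatch

/-- Stability bound for `n` fields (core of Theorem F.1): if every birth–death pair
of every point of `f` and `g` has persistence at most `M`, then the Wasserstein
matching distance between the diagonal-augmented families is at most
`((n₁ + n₂) M^q)^(1/q)`. -/
theorem stability_bound_n_fields {k : ℕ} (hk : 1 ≤ k)
    {ι₁ ι₂ : Type*} [Fintype ι₁] [Fintype ι₂]
    (q M : ℝ) (hq : 1 ≤ q) (hM : 0 ≤ M)
    (f : ι₁ → Fin k → ℝ × ℝ) (g : ι₂ → Fin k → ℝ × ℝ)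
    (hf : ∀ i, ∀ j : Fin k, (f i j).1 ≤ (f i j).2 ∧ (f i j).2 - (f i j).1 ≤ M)
    (hg : ∀ i, ∀ j : Fin k, (g i j).1 ≤ (g i j).2 ∧ (g i j).2 - (g i j).1 ≤ M) :
    wassersteinDist q
        (Sum.elim f (fun j => DiagK (g j)))
        (Sum.elim (fun i => DiagK (f i)) g)
      ≤ (((Fintype.card ι₁ : ℝ) + (Fintype.card ι₂ : ℝ)) * M ^ q) ^ (1 / q) :=
  stability_bound_n_fields_general q M hq hM f g hf hg
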